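/- Let p be a prime. Then, as formal power series in z with coefficients in the polynomial ring ℤ[x]: (i) Σ_{n≥0} x^{s_p(n)} z^n = ∏_{i≥0} (1 + x z^{p^i} + x² z^{2p^i} + ⋯ + x^{p−1} z^{(p−1)p^i}); and (ii) (Σ_{n≥0} x^{s_p(n)} z^n)² = Σ_{n≥0} z^n · Σ_{j≥0} θ_p(j,n) x^{s_p(n)+(p−1)j}; equivalently, for every n ≥ 0 one has the polynomial identity Σ_{t=0}^{n} x^{s_p(t)+s_p(n−t)} = Σ_{j≥0} θ_p(j,n)·x^{s_p(n)+(p−1)j}. -/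

import Mathlib

/-!
Writing `n = a + p m` with `0 ≤ a < p` gives `s_p(n) = a + s_p(m)`, so splitting off the factor
`i = 0` and substituting `z ↦ z^p` in the others expands the product into `Σ_n x^{s_p(n)} z^n`.
For the square, the coefficient of `z^n` is `Σ_t x^{s_p(t) + s_p(n-t)}`, and Legendre's formula
`(p-1) ν_p(m!) = m - s_p(m)` turns each exponent into `s_p(n) + (p-1) ν_p(binom n t)` (Kummer);
grouping `t` by this valuation gives the `θ_p(j,n)`.
-/

open Finset

/-- `theta p j n` is the number of `t ∈ {0,…,n}` with `ν_p (binom n t) = j`. -/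
def theta (p j n : ℕ) : ℕ :=
  ((Finset.range (n + 1)).filter fun t => padicValNat p (n.choose t) = j).card

/-- the base-`p` digit of `n` at position `i`. -/
def digit (p n i : ℕ) : ℕ := n / p ^ i % p

/-- Words over `{0,…,p−1}` are represented as lists, least significant (rightmost) letter
first; `wordCount p w n` is the number of occurrences of `w` as a factor of the base-`p`
expansion of `n` (padded with leading zeros). -/
noncomputable def wordCount (p : ℕ) (w : List ℕ) (n : ℕ) : ℕ :=
  Set.ncard {i : ℕ | ∀ k < w.length, digit p n (i + k) = w.getD k 0}

/-- membership in the set `W` of admissible words: length ≥ 2, letters `< p`,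
leftmost letter (last entry of the list) nonzero, rightmost letter (head) ≠ p−1. -/
def Adm (p : ℕ) (w : List ℕ) : Prop :=
  2 ≤ w.length ∧ (∀ a ∈ w, a < p) ∧ w.getD (w.length - 1) 0 ≠ 0 ∧ w.getD 0 0 ≠ p - 1

/-- membership in `W_j`. -/
def AdmJ (p j : ℕ) (w : List ℕ) : Prop := Adm p w ∧ w.length ≤ j + 1

/-- membership in `W̃`: nonempty words with letters `< p` and nonzero leftmost letter. -/
def Wt (p : ℕ) (w : List ℕ) : Prop :=
  w ≠ [] ∧ (∀ a ∈ w, a < p) ∧ w.getD (w.length - 1) 0 ≠ 0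

/-- The polynomial `T_n(x) = Σ_{t=0}^n x^{ν_p(binom n t)}`. -/
noncomputable def Tpoly (p n : ℕ) : Polynomial ℤ :=
  ∑ t ∈ Finset.range (n + 1), Polynomial.X ^ padicValNat p (n.choose t)

/-- right truncation: remove the rightmost letter. -/
def rightT (w : List ℕ) : List ℕ := w.tail

/-- left truncation: remove the leftmost letter together with the zeros following it. -/
def leftT (w : List ℕ) : List ℕ := ((w.dropLast).reverse.dropWhile (· = 0)).reverse

/-- the common value `w_{LR} = (w_L)_R = (w_R)_L`. -/
def lrT (w : List ℕ) : List ℕ := leftT w.tail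

/-- `T̄_v = T_{(v)_p}/θ_p(0,(v)_p)` as a rational function over `ℚ`. -/
noncomputable def TbarR (p : ℕ) (v : List ℕ) : RatFunc ℚ :=
  algebraMap (Polynomial ℚ) (RatFunc ℚ) ((Tpoly p (Nat.ofDigits p v)).map (Int.castRingHom ℚ)) /
    (theta p 0 (Nat.ofDigits p v) : RatFunc ℚ)

/-- the rational function `r_w`. -/
noncomputable def rFun (p : ℕ) (w : List ℕ) : RatFunc ℚ :=
  TbarR p w * TbarR p (lrT w) / (TbarR p (rightT w) * TbarR p (leftT w))

/-- `T̄_v` as a power series over `ℚ`. -/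
noncomputable def TbarS (p : ℕ) (v : List ℕ) : PowerSeries ℚ :=
  (((Tpoly p (Nat.ofDigits p v)).map (Int.castRingHom ℚ) : Polynomial ℚ) : PowerSeries ℚ) *
    (PowerSeries.C (R := ℚ) (theta p 0 (Nat.ofDigits p v) : ℚ))⁻¹

/-- the power series expansion of `r_w` at `0`. -/
noncomputable def rSer (p : ℕ) (w : List ℕ) : PowerSeries ℚ :=
  TbarS p w * TbarS p (lrT w) * (TbarS p (rightT w) * TbarS p (leftT w))⁻¹

/-- `T̄_v` as a polynomial over `ℚ`. -/
noncomputable def TbarP (p : ℕ) (v : List ℕ) : Polynomial ℚ :=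
  ((theta p 0 (Nat.ofDigits p v) : ℚ))⁻¹ • ((Tpoly p (Nat.ofDigits p v)).map (Int.castRingHom ℚ))

/-- formal logarithm of a power series with constant term 1. -/
noncomputable def logPS {K : Type*} [Field K] (f : PowerSeries K) : PowerSeries K :=
  PowerSeries.mk fun n => ∑ k ∈ Finset.range (n + 1),
    ((-1 : K) ^ (k + 1) / k) * PowerSeries.coeff (R := K) n ((f - 1) ^ k)

/-- formal exponential of a power series with constant term 0. -/
noncomputable def expPS {K : Type*} [Field K] (f : PowerSeries K) : PowerSeries K :=
  PowerSeries.mk fun n => ∑ k ∈ Finset.range (n + 1),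
    ((k.factorial : K))⁻¹ * PowerSeries.coeff (R := K) n (f ^ k)

/-- integer powers of a power series over a field. -/
noncomputable def fpow {K : Type*} [Field K] (f : PowerSeries K) (z : ℤ) : PowerSeries K :=
  if 0 ≤ z then f ^ z.toNat else f⁻¹ ^ (-z).toNat

/-- sum of base-`p` digits. -/
def digitSum (p n : ℕ) : ℕ := (Nat.digits p n).sum

theorem Finset.sum_range_mul_eq_sum_sum {M : Type*} [AddCommMonoid M] (f : ℕ → M) (a b : ℕ) :
    ∑ m ∈ range (a * b), f m = ∑ q ∈ range b, ∑ r ∈ range a, f (r + a * q) := by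
  induction b with
  | zero => simp
  | succ b ih =>
    rw [mul_add_one, sum_range_add, ih, sum_range_succ]
    exact congrArg _ (sum_congr rfl fun r _ => by rw [add_comm])

theorem digitSum_add_mul {p a : ℕ} (hp : 1 < p) (ha : a < p) (m : ℕ) :
    digitSum p (a + p * m) = a + digitSum p m := by
  by_cases h0 : a = 0 ∧ m = 0
  · simp [h0, digitSum]
  · rw [digitSum, Nat.digits_add p hp a m ha (by omega), List.sum_cons, digitSum]

theorem prod_sum_pow_mul_pow_eq_sum_digitSum {S : Type*} [CommSemiring S] {p : ℕ} (hp : 1 < p)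
    (x z : S) (N : ℕ) :
    ∏ i ∈ range N, ∑ a ∈ range p, x ^ a * z ^ (a * p ^ i) =
      ∑ m ∈ range (p ^ N), x ^ digitSum p m * z ^ m := by
  induction N generalizing z with
  | zero => simp [digitSum]
  | succ N ih =>
    have hz : ∀ i a, z ^ (a * p ^ (i + 1)) = (z ^ p) ^ (a * p ^ i) := fun i a => by ring
    simp_rw [prod_range_succ', hz, ih, pow_succ', sum_range_mul_eq_sum_sum, sum_mul_sum]
    refine sum_congr rfl fun q _ => sum_congr rfl fun r hr => ?_
    rw [digitSum_add_mul hp (mem_range.1 hr)]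
    ring

theorem coeff_prod_sum_C_pow_mul_X_pow {R : Type*} [CommSemiring R] {p N n : ℕ} (hp : 1 < p)
    (hn : n < p ^ N) (x : R) :
    PowerSeries.coeff n (∏ i ∈ range N, ∑ a ∈ range p,
      PowerSeries.C (x ^ a) * PowerSeries.X ^ (a * p ^ i)) = x ^ digitSum p n := by
  simp only [map_pow]
  rw [prod_sum_pow_mul_pow_eq_sum_digitSum hp, map_sum]
  simp only [← map_pow, PowerSeries.coeff_C_mul_X_pow, sum_ite_eq, mem_range, hn, if_true]

theorem digitSum_add_digitSum_sub {p t n : ℕ} (hp : p.Prime) (ht : t ≤ n) :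
    digitSum p t + digitSum p (n - t) = digitSum p n + (p - 1) * padicValNat p (n.choose t) := by
  have : Fact p.Prime := ⟨hp⟩
  have hchoose := (Nat.choose_pos ht).ne'
  have hfactorial : padicValNat p n.factorial =
      padicValNat p (n.choose t) + padicValNat p t.factorial + padicValNat p (n - t).factorial := by
    rw [← Nat.choose_mul_factorial_mul_factorial ht,
      padicValNat.mul (mul_ne_zero hchoose (Nat.factorial_ne_zero _)) (Nat.factorial_ne_zero _),
      padicValNat.mul hchoose (Nat.factorial_ne_zero _)]
  have h := congrArg ((p - 1) * ·) hfactorial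
  simp only [mul_add, sub_one_mul_padicValNat_factorial] at h
  have := Nat.digit_sum_le p t
  have := Nat.digit_sum_le p (n - t)
  have := Nat.digit_sum_le p n
  unfold digitSum
  omega

theorem padicValNat_choose_le {p t n : ℕ} (hp : p.Prime) : padicValNat p (n.choose t) ≤ n := by
  rw [← Nat.factorization_def _ hp]
  exact Nat.factorization_choose_le_log.trans (Nat.log_le_self p n)

theorem sum_pow_digitSum_add_digitSum_sub {R : Type*} [CommSemiring R] {p : ℕ} (hp : p.Prime)
    (x : R) (n : ℕ) :
    ∑ t ∈ range (n + 1), x ^ (digitSum p t + digitSum p (n - t)) =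
      ∑ j ∈ range (n + 1), (theta p j n : R) * x ^ (digitSum p n + (p - 1) * j) := by
  have hmaps : ∀ t ∈ range (n + 1), padicValNat p (n.choose t) ∈ range (n + 1) := fun t _ =>
    mem_range.2 (Nat.lt_succ_of_le (padicValNat_choose_le hp))
  rw [← sum_fiberwise_of_maps_to hmaps]
  refine sum_congr rfl fun j _ => ?_
  rw [theta, ← nsmul_eq_mul, ← sum_const]
  refine sum_congr rfl fun t ht => ?_
  rw [mem_filter, mem_range] at ht
  rw [digitSum_add_digitSum_sub hp (Nat.lt_succ_iff.1 ht.1), ht.2]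

/-- The infinite product is encoded through its `n`-th coefficients: the factors with `i > n` are
`1 + O(z^{n+1})`, so the partial product over `i ≤ n` has the same `n`-th coefficient. -/
theorem stmt19 (p : ℕ) (hp : p.Prime) :
    (∀ n : ℕ,
      PowerSeries.coeff (R := Polynomial ℤ) n
          (PowerSeries.mk fun m => (Polynomial.X : Polynomial ℤ) ^ digitSum p m) =
        PowerSeries.coeff (R := Polynomial ℤ) n
          (∏ i ∈ Finset.range (n + 1),
            ∑ a ∈ Finset.range p,
              PowerSeries.C (R := Polynomial ℤ) (Polynomial.X ^ a) *
                PowerSeries.X ^ (a * p ^ i))) ∧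
    (PowerSeries.mk fun m => (Polynomial.X : Polynomial ℤ) ^ digitSum p m) ^ 2 =
      PowerSeries.mk (fun n => ∑ j ∈ Finset.range (n + 1),
        (theta p j n : Polynomial ℤ) * Polynomial.X ^ (digitSum p n + (p - 1) * j)) ∧
    ∀ n : ℕ,
      ∑ t ∈ Finset.range (n + 1),
          (Polynomial.X : Polynomial ℤ) ^ (digitSum p t + digitSum p (n - t)) =
        ∑ j ∈ Finset.range (n + 1),
          (theta p j n : Polynomial ℤ) * Polynomial.X ^ (digitSum p n + (p - 1) * j) := by
  refine ⟨fun n => ?_, ?_, sum_pow_digitSum_add_digitSum_sub hp _⟩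
  · have hn : n < p ^ (n + 1) := (Nat.lt_pow_self hp.one_lt).trans
      (Nat.pow_lt_pow_right hp.one_lt n.lt_succ_self)
    rw [PowerSeries.coeff_mk, coeff_prod_sum_C_pow_mul_X_pow hp.one_lt hn]
  · refine PowerSeries.ext fun n => ?_
    rw [sq, PowerSeries.coeff_mul, Finset.Nat.sum_antidiagonal_eq_sum_range_succ_mk]
    simp only [PowerSeries.coeff_mk, ← pow_add]
    exact sum_pow_digitSum_add_digitSum_sub hp (Polynomial.X : Polynomial ℤ) n
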